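/- arXiv:2501.04349 — 2 statements merged into one kernel-verified Lean document; each statement's English description precedes it below -/
import Mathlib

section
/- Let A be a regular, semisimple, commutative Banach algebra with Gelfand spectrum Δ(A), and let E be a closed subset of Δ(A). Then j_A(E) = {a ∈ A : the Gelfand transform of a has compact support disjoint from E} is an ideal of A, and for any closed ideal I of A with zero set Z(I) = E, one has j_A(E) ⊆ I ⊆ I_A(E), where I_A(E) = {a ∈ A : â vanishes on E}. -/
open WeakDual Topology

variable {A : Type*} [NormedCommRing A] [NormedAlgebra ℂ A] [CompleteSpace A]

/-- `A` is regular: for every closed `F ⊆ Δ(A)` and `φ ∉ F` there is `a ∈ A` with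
`â(φ) ≠ 0` and `â ≡ 0` on `F`. -/
def IsRegularBA (A : Type*) [NormedCommRing A] [NormedAlgebra ℂ A] [CompleteSpace A] : Prop :=
  ∀ F : Set (characterSpace ℂ A), IsClosed F → ∀ φ ∉ F,
    ∃ a : A, φ a ≠ 0 ∧ ∀ ψ ∈ F, ψ a = 0

/-- `A` is semisimple: the Gelfand transform is injective. -/
def IsSemisimpleBA (A : Type*) [NormedCommRing A] [NormedAlgebra ℂ A] [CompleteSpace A] : Prop :=
  ∀ a : A, (∀ φ : characterSpace ℂ A, φ a = 0) → a = 0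

/-- `I_A(E) = {a ∈ A : â = 0 on E}`. -/
def IsetBA (A : Type*) [NormedCommRing A] [NormedAlgebra ℂ A] [CompleteSpace A]
    (E : Set (characterSpace ℂ A)) : Set A :=
  {a : A | ∀ φ ∈ E, φ a = 0}

/-- `j_A(E) = {a ∈ A : â has compact support disjoint from E}`. -/
def jsetBA (A : Type*) [NormedCommRing A] [NormedAlgebra ℂ A] [CompleteSpace A]
    (E : Set (characterSpace ℂ A)) : Set A :=
  {a : A | HasCompactSupport (fun φ : characterSpace ℂ A => φ a) ∧
    Disjoint (tsupport fun φ : characterSpace ℂ A => φ a) E}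

/-- `J_A(E)` is the closure of `j_A(E)`; `E` is a set of spectral synthesis if
`I_A(E) = J_A(E)`. -/
def IsSynthesisSetBA (A : Type*) [NormedCommRing A] [NormedAlgebra ℂ A] [CompleteSpace A]
    (E : Set (characterSpace ℂ A)) : Prop :=
  IsetBA A E = closure (jsetBA A E)

/-- Auxiliary: the ideal of elements whose Gelfand transform vanishes on `K`. -/
def kIdealBA (A : Type*) [NormedCommRing A] [NormedAlgebra ℂ A] [CompleteSpace A]
    (K : Set (characterSpace ℂ A)) : Ideal A where
  carrier := {x : A | ∀ φ ∈ K, φ x = 0}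
  add_mem' := by
    intro x y hx hy φ hφ
    simp [map_add, hx φ hφ, hy φ hφ]
  zero_mem' := by intro φ hφ; simp
  smul_mem' := by
    intro c x hx φ hφ
    simp [smul_eq_mul, map_mul, hx φ hφ]

/-- for a regular semisimple commutative Banach algebra `A` and closed
`E ⊆ Δ(A)`, `j_A(E)` is an ideal of `A`, and every closed ideal `I` with zero set
`Z(I) = E` satisfies `j_A(E) ⊆ I ⊆ I_A(E)`. -/
theorem jset_ideal_and_between (hreg : IsRegularBA A) (hss : IsSemisimpleBA A)
    (E : Set (characterSpace ℂ A)) (hE : IsClosed E) :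
    (∃ Jd : Ideal A, (Jd : Set A) = jsetBA A E) ∧
    ∀ I : Ideal A, IsClosed (I : Set A) →
      {φ : characterSpace ℂ A | ∀ a ∈ I, φ a = 0} = E →
      jsetBA A E ⊆ (I : Set A) ∧ (I : Set A) ⊆ IsetBA A E := by
  constructor
  · -- `j_A(E)` is an ideal
    refine ⟨{ carrier := jsetBA A E, add_mem' := ?_, zero_mem' := ?_, smul_mem' := ?_ }, rfl⟩
    · rintro x y ⟨hxc, hxd⟩ ⟨hyc, hyd⟩
      have hfun : (fun φ : characterSpace ℂ A => φ (x + y)) =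
          (fun φ : characterSpace ℂ A => φ x) + fun φ : characterSpace ℂ A => φ y := by
        funext φ; exact map_add φ x y
      refine ⟨?_, ?_⟩
      · rw [hfun]; exact hxc.add hyc
      · rw [hfun]
        exact Set.disjoint_left.mpr fun ψ hψ hψE =>
          ((Set.mem_union _ _ _).mp (tsupport_add _ _ hψ)).elim
            (fun h => Set.disjoint_left.mp hxd h hψE)
            (fun h => Set.disjoint_left.mp hyd h hψE)
    · have hfun : (fun φ : characterSpace ℂ A => φ (0 : A)) = (fun _ => (0:ℂ)) := by
        funext φ; exact map_zero φ
      have hts : tsupport (fun _ : characterSpace ℂ A => (0:ℂ)) = ∅ := by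
        simp [tsupport]
      constructor
      · rw [HasCompactSupport, hfun, hts]
        exact isCompact_empty
      · rw [hfun, hts]
        exact Set.empty_disjoint E
    · rintro c x ⟨hxc, hxd⟩
      have hfun : (fun φ : characterSpace ℂ A => φ (c • x)) =
          (fun φ : characterSpace ℂ A => φ c * φ x) := by
        funext φ; simp [smul_eq_mul, map_mul]
      refine ⟨?_, ?_⟩
      · rw [hfun]; exact hxc.mono' (subset_closure.trans tsupport_mul_subset_right)
      · rw [hfun]; exact hxd.mono_left tsupport_mul_subset_right
  · intro I hIc hZ
    constructor
    · -- j_A(E) ⊆ I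
      rintro a ⟨hc, hd⟩
      set K := tsupport (fun φ : characterSpace ℂ A => φ a) with hK
      -- the ideal I ⊔ k(K) is all of A
      have htop : I ⊔ kIdealBA A K = ⊤ := by
        by_contra hne
        obtain ⟨M, hMmax, hMle⟩ := Ideal.exists_le_maximal _ hne
        set φ := M.toCharacterSpace
        have hφ : ∀ x ∈ I ⊔ kIdealBA A K, φ x = 0 := fun x hx =>
          M.toCharacterSpace_apply_eq_zero_of_mem (hMle hx)
        have hφE : φ ∈ E := by
          rw [← hZ]
          exact fun x hx => hφ x (Ideal.mem_sup_left hx)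
        have hφK : φ ∈ K := by
          by_contra hφK
          obtain ⟨x, hx1, hx2⟩ := hreg K (isClosed_tsupport _) φ hφK
          exact hx1 (hφ x (Ideal.mem_sup_right hx2))
        exact Set.disjoint_left.mp hd hφK hφE
      obtain ⟨u, hu, c, hcK, huc⟩ := Submodule.mem_sup.mp (htop ▸ Submodule.mem_top :
        (1 : A) ∈ I ⊔ kIdealBA A K)
      have hac : a * c = 0 := by
        apply hss
        intro ψ
        rw [map_mul]
        by_cases hψ : ψ ∈ K
        · rw [hcK ψ hψ, mul_zero]
        · rw [image_eq_zero_of_notMem_tsupport hψ, zero_mul]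
      have : a = a * u := by
        calc a = a * (u + c) := by rw [huc, mul_one]
        _ = a * u + a * c := by ring
        _ = a * u := by rw [hac, add_zero]
      rw [this]
      exact I.mul_mem_left a hu
    · -- I ⊆ I_A(E)
      intro a ha φ hφ
      rw [← hZ] at hφ
      exact hφ a ha
end

section
/- Let H be a closed subgroup of a locally compact group G, X an A^n(G)-submodule of VN^n(G), and E ⊆ H^n closed. If E is an X-Ditkin set for A^n(G), then E is an X_H-Ditkin set for A^n(H). -/
open Filter Topology

/-- Abstract model of the `n`-dimensional Fourier algebra `Aⁿ(G)` of Todorov–Turowska: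
a commutative Banach algebra `A` of continuous functions on `Gⁿ`, realized via an injective
algebra homomorphism into the functions on `Fin n → G`, which is regular and has evaluations
bounded by the norm. -/
structure MultiFourierAlgebra (G : Type*) [Group G] [TopologicalSpace G]
    [IsTopologicalGroup G] [LocallyCompactSpace G] (n : ℕ)
    (A : Type*) [NormedCommRing A] [NormedAlgebra ℂ A] [CompleteSpace A] : Type _ where
  toFun : A →ₐ[ℂ] ((Fin n → G) → ℂ)
  injective : Function.Injective toFun
  continuous_toFun : ∀ u : A, Continuous (toFun u)
  eval_bound : ∀ (x : Fin n → G) (u : A), ‖toFun u x‖ ≤ ‖u‖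
  regular : ∀ F : Set (Fin n → G), IsClosed F → ∀ x ∉ F,
    ∃ u : A, toFun u x ≠ 0 ∧ ∀ y ∈ F, toFun u y = 0

namespace MultiFourierAlgebra

variable {G : Type*} [Group G] [TopologicalSpace G] [IsTopologicalGroup G]
  [LocallyCompactSpace G] {n : ℕ} {A : Type*} [NormedCommRing A]
  [NormedAlgebra ℂ A] [CompleteSpace A]

/-- The ideal `I_{Aⁿ(G)}(E)` of functions vanishing on `E`. -/
def Iset (𝔄 : MultiFourierAlgebra G n A) (E : Set (Fin n → G)) : Set A :=
  {u | ∀ x ∈ E, 𝔄.toFun u x = 0}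

/-- The ideal `j_{Aⁿ(G)}(E)` of functions with compact support disjoint from `E`. -/
def jset (𝔄 : MultiFourierAlgebra G n A) (E : Set (Fin n → G)) : Set A :=
  {u | HasCompactSupport (𝔄.toFun u) ∧ Disjoint (tsupport (𝔄.toFun u)) E}

/-- `J_{Aⁿ(G)}(E)`, the closure of `j_{Aⁿ(G)}(E)`. -/
def Jset (𝔄 : MultiFourierAlgebra G n A) (E : Set (Fin n → G)) : Set A :=
  closure (𝔄.jset E)

/-- `E` is a set of spectral synthesis for `Aⁿ(G)` if `I(E) = J(E)`. -/
def IsSynthesisSet (𝔄 : MultiFourierAlgebra G n A) (E : Set (Fin n → G)) : Prop :=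
  𝔄.Iset E = 𝔄.Jset E

/-- The support of an element `T` of the dual `VNⁿ(G) = (Aⁿ(G))*`. -/
def dsupp (𝔄 : MultiFourierAlgebra G n A) (T : StrongDual ℂ A) :
    Set (Fin n → G) :=
  {x | ∀ U ∈ nhds x, ∃ u : A, tsupport (𝔄.toFun u) ⊆ U ∧ T u ≠ 0}

/-- The module action `u · T` of `Aⁿ(G)` on its dual, `⟨v, u·T⟩ = ⟨uv, T⟩`. -/
noncomputable def dualSMul (u : A) (T : StrongDual ℂ A) : StrongDual ℂ A :=
  T.comp (ContinuousLinearMap.mul ℂ A u)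

/-- The weak*-closure of a set of functionals. -/
def wstarClosure (S : Set (StrongDual ℂ A)) : Set (StrongDual ℂ A) :=
  {T | (fun u : A => T u) ∈
    closure ((fun (T' : StrongDual ℂ A) => fun u : A => T' u) '' S)}

/-- The evaluation functional `λ(x₁) ⊗ ⋯ ⊗ λ(xₙ)`, i.e. `u ↦ u(x)`. -/
noncomputable def evalAt (𝔄 : MultiFourierAlgebra G n A) (x : Fin n → G) :
    StrongDual ℂ A :=
  LinearMap.mkContinuous
    { toFun := fun u => 𝔄.toFun u x
      map_add' := fun u v => by simp [map_add]
      map_smul' := fun c u => by simp [map_smul] }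
    1 (fun u => by simpa using 𝔄.eval_bound x u)

/-- `VNⁿ_E(G)`: the weak*-closed linear span of `{λ(x₁)⊗⋯⊗λ(xₙ) : x ∈ E}`. -/
noncomputable def VNspan (𝔄 : MultiFourierAlgebra G n A) (E : Set (Fin n → G)) :
    Set (StrongDual ℂ A) :=
  wstarClosure ((Submodule.span ℂ (𝔄.evalAt '' E) : Submodule ℂ (StrongDual ℂ A)) :
    Set (StrongDual ℂ A))

end MultiFourierAlgebra

namespace MultiFourierAlgebra

variable {G : Type*} [Group G] [TopologicalSpace G] [IsTopologicalGroup G]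
  [LocallyCompactSpace G] {n : ℕ} {A : Type*} [NormedCommRing A]
  [NormedAlgebra ℂ A] [CompleteSpace A]

/-- `E` is an `X`-Ditkin set for `Aⁿ(G)`: for every `u` vanishing on `E` and every
`T ∈ X` there is `v` vanishing on an open neighborhood of `E` with `⟨u,T⟩ = ⟨uv,T⟩`. -/
def IsXDitkinSet (𝔄 : MultiFourierAlgebra G n A)
    (X : Set (StrongDual ℂ A)) (E : Set (Fin n → G)) : Prop :=
  ∀ u ∈ 𝔄.Iset E, ∀ T ∈ X, ∃ v : A,
    (∃ U : Set (Fin n → G), IsOpen U ∧ E ⊆ U ∧ ∀ x ∈ U, 𝔄.toFun v x = 0) ∧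
    T u = T (u * v)

end MultiFourierAlgebra

open MultiFourierAlgebra in
/-- with `H` a closed subgroup of `G` (realized by a topological group
embedding `ι : H →* G` with closed range), `X` an `Aⁿ(G)`-submodule of `VNⁿ(G)`,
`rₙ` the restriction map and `X_H = (rₙ*)⁻¹(X)`: if a closed `E ⊆ Hⁿ` is an `X`-Ditkin
set for `Aⁿ(G)` then `E` is an `X_H`-Ditkin set for `Aⁿ(H)`. -/
theorem X_Ditkin_injection_forward
    {G : Type*} [Group G] [TopologicalSpace G] [IsTopologicalGroup G] [LocallyCompactSpace G]
    {H : Type*} [Group H] [TopologicalSpace H] [IsTopologicalGroup H] [LocallyCompactSpace H]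
    (ι : H →* G) (hι : IsEmbedding ι) (hrange : IsClosed (Set.range ι))
    {n : ℕ} {A B : Type*} [NormedCommRing A] [NormedAlgebra ℂ A] [CompleteSpace A]
    [NormedCommRing B] [NormedAlgebra ℂ B] [CompleteSpace B]
    (𝔄 : MultiFourierAlgebra G n A) (𝔅 : MultiFourierAlgebra H n B)
    (r : A →L[ℂ] B) (hr_mul : ∀ u v : A, r (u * v) = r u * r v)
    (hr : ∀ (u : A) (x : Fin n → H), 𝔅.toFun (r u) x = 𝔄.toFun u (fun i => ι (x i)))
    (hr_surj : Function.Surjective r)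
    (X : Submodule ℂ (StrongDual ℂ A))
    (hX : ∀ (u : A), ∀ T ∈ X, dualSMul u T ∈ X)
    (E : Set (Fin n → H)) (hE : IsClosed E)
    (hDitkin : 𝔄.IsXDitkinSet (X : Set (StrongDual ℂ A))
      ((fun x : Fin n → H => fun i => ι (x i)) '' E)) :
    𝔅.IsXDitkinSet {S : StrongDual ℂ B | S.comp r ∈ X} E := by
  intro u hu S hS
  obtain ⟨w, hw⟩ := hr_surj u
  have hwI : w ∈ 𝔄.Iset ((fun x : Fin n → H => fun i => ι (x i)) '' E) := by
    rintro x ⟨y, hy, rfl⟩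
    have := hr w y
    rw [hw] at this
    rw [← this]
    exact hu y hy
  obtain ⟨v', ⟨U, hUopen, hEU, hUzero⟩, hTv⟩ := hDitkin w hwI (S.comp r) hS
  refine ⟨r v', ⟨(fun x : Fin n → H => fun i => ι (x i)) ⁻¹' U, ?_, ?_, ?_⟩, ?_⟩
  · exact hUopen.preimage (continuous_pi fun i => hι.continuous.comp (continuous_apply i))
  · intro y hy; exact hEU ⟨y, hy, rfl⟩
  · intro x hx; rw [hr]; exact hUzero _ hx
  · have h1 : S u = S (r w) := by rw [hw]
    have h2 : S (r (w * v')) = S (u * r v') := by rw [hr_mul, hw]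
    simpa [h1, h2] using hTv
end
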